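/- arXiv:2409.08085 — 7 statements merged into one kernel-verified Lean document; each statement's English description precedes it below -/
import Mathlib

section
/- For all integers n ≥ 2, the generating polynomial h_n(x;t) = ∑_{d=1}^{n-1} g_{n,d}(t) x^d satisfies the recurrence h_{n+2}(x;t) = (1+x)·h_{n+1}(x;t) + t·x·h_n(x;t). -/
/-!
Write `n = e + m + 2` and `d = e + 1`. Then `g_{n,d}(t)` is the coefficient of `z^e` in
`A_m(z) B_m(z)`, where `A_m = (1 - z)^{-(m+1)} = ∑_j C(j + m, m) z^j` and `B_m = t (1 + t z)^m`.
Pascal's rule for both factors gives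
`F(m+1, e+1) = F(m, e+1) + F(m+1, e) + t F(m, e)` for these coefficients `F(m, e)`, and since
`h_{N+2} = x ∑_{e+m=N} F(m, e) x^e`, this is exactly the recurrence read off coefficientwise.
-/

open Polynomial Finset

/-- Speyer's g-polynomial of the uniform matroid `U_{n,d}`, evaluated at `t`. -/
noncomputable def speyerG (n d : ℕ) (t : ℝ) : ℝ :=
  ∑ i ∈ Finset.Icc 1 d,
    ((n - i - 1).choose (d - i) : ℝ) * ((n - d - 1).choose (i - 1) : ℝ) * t ^ i

/-- The generating polynomial `h_n(x;t) = ∑_{d=1}^{n-1} g_{n,d}(t) x^d` (in `x`). -/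
noncomputable def hPoly (n : ℕ) (t : ℝ) : Polynomial ℝ :=
  ∑ d ∈ Finset.Icc 1 (n - 1), Polynomial.C (speyerG n d t) * Polynomial.X ^ d

lemma sum_Icc_one_eq_sum_range {M : Type*} [AddCommMonoid M] (f : ℕ → M) (n : ℕ) :
    ∑ i ∈ Icc 1 n, f i = ∑ i ∈ range n, f (i + 1) := by
  rw [← Ico_add_one_right_eq_Icc, range_eq_Ico, sum_Ico_add' f 0 n 1, zero_add]

/- In the coordinates `k = i - 1`, `j = d - i`, `m = n - d - 1` the summand of `speyerG n d t`
becomes `C(m, k) t^(k+1) · C(j + m, m)`, free of truncated subtraction. -/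
noncomputable def speyerGConv (m e : ℕ) (t : ℝ) : ℝ :=
  ∑ p ∈ antidiagonal e, ((m.choose p.1 : ℝ) * t ^ (p.1 + 1)) * ((p.2 + m).choose m : ℝ)

lemma speyerG_eq_speyerGConv (m e : ℕ) (t : ℝ) :
    speyerG (e + m + 2) (e + 1) t = speyerGConv m e t := by
  rw [speyerG, speyerGConv, sum_Icc_one_eq_sum_range, Nat.sum_antidiagonal_eq_sum_range_succ
    (fun k j => ((m.choose k : ℝ) * t ^ (k + 1)) * ((j + m).choose m : ℝ))]
  refine sum_congr rfl fun k hk => ?_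
  have hke : k ≤ e := Nat.lt_succ_iff.mp (mem_range.mp hk)
  rw [show e + m + 2 - (k + 1) - 1 = e - k + m by omega, show e + 1 - (k + 1) = e - k by omega,
    show e + m + 2 - (e + 1) - 1 = m by omega, Nat.add_sub_cancel, Nat.choose_symm_add]
  ring

lemma speyerGConv_zero_left (e : ℕ) (t : ℝ) : speyerGConv 0 e t = t := by
  cases e <;> simp [speyerGConv, Nat.sum_antidiagonal_succ]

lemma speyerGConv_zero_right (m : ℕ) (t : ℝ) : speyerGConv m 0 t = t := by
  simp [speyerGConv]

lemma speyerGConv_succ_succ (m e : ℕ) (t : ℝ) :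
    speyerGConv (m + 1) (e + 1) t
      = speyerGConv m (e + 1) t + speyerGConv (m + 1) e t + t * speyerGConv m e t := by
  set b : ℕ → ℕ → ℝ := fun m k => (m.choose k : ℝ) * t ^ (k + 1) with hb
  set a : ℕ → ℕ → ℝ := fun m j => ((j + m).choose m : ℝ) with ha
  have hF : ∀ m e, speyerGConv m e t = ∑ p ∈ antidiagonal e, b m p.1 * a m p.2 :=
    fun _ _ => rfl
  have ha_zero : a (m + 1) 0 = a m 0 := by simp [ha]
  have ha_succ : ∀ j, a (m + 1) (j + 1) = a m (j + 1) + a (m + 1) j := fun j => by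
    simp only [ha, show j + 1 + (m + 1) = j + 1 + m + 1 by ring, Nat.choose_succ_succ,
      Nat.cast_add, show j + 1 + m = j + (m + 1) by ring]
  have hb_zero : b (m + 1) 0 = b m 0 := by simp [hb]
  have hb_succ : ∀ k, b (m + 1) (k + 1) = b m (k + 1) + t * b m k := fun k => by
    simp only [hb, Nat.choose_succ_succ, Nat.cast_add]
    ring
  -- On generating functions in `z`: `(1 - z) A_{m+1} = A_m` and `B_{m+1} = (1 + t z) B_m`.
  have hsplit_a : speyerGConv (m + 1) (e + 1) t
      = ∑ p ∈ antidiagonal (e + 1), b (m + 1) p.1 * a m p.2 + speyerGConv (m + 1) e t := by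
    rw [hF, hF, Nat.sum_antidiagonal_succ', Nat.sum_antidiagonal_succ' (f := fun p => _ * a m p.2)]
    simp only [ha_zero, ha_succ, mul_add, sum_add_distrib]
    ring
  have hsplit_b : ∑ p ∈ antidiagonal (e + 1), b (m + 1) p.1 * a m p.2
      = speyerGConv m (e + 1) t + t * speyerGConv m e t := by
    rw [hF, hF, Nat.sum_antidiagonal_succ, Nat.sum_antidiagonal_succ (f := fun p => b m p.1 * _)]
    simp only [hb_zero, hb_succ, add_mul, sum_add_distrib, mul_sum, mul_assoc]
    ring
  rw [hsplit_a, hsplit_b]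
  ring

noncomputable def hPolyAddTwoDivX (N : ℕ) (t : ℝ) : ℝ[X] :=
  ∑ p ∈ antidiagonal N, C (speyerGConv p.2 p.1 t) * X ^ p.1

lemma hPoly_add_two (N : ℕ) (t : ℝ) : hPoly (N + 2) t = X * hPolyAddTwoDivX N t := by
  rw [hPoly, hPolyAddTwoDivX, show N + 2 - 1 = N + 1 from rfl, sum_Icc_one_eq_sum_range,
    Nat.sum_antidiagonal_eq_sum_range_succ (fun e m => C (speyerGConv m e t) * X ^ e), mul_sum]
  refine sum_congr rfl fun k hk => ?_
  have hkN : k ≤ N := Nat.lt_succ_iff.mp (mem_range.mp hk)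
  rw [← speyerG_eq_speyerGConv, show k + (N - k) + 2 = N + 2 by omega]
  ring

lemma hPolyAddTwoDivX_add_two (N : ℕ) (t : ℝ) :
    hPolyAddTwoDivX (N + 2) t
      = (1 + X) * hPolyAddTwoDivX (N + 1) t + C t * X * hPolyAddTwoDivX N t := by
  have hN2 : hPolyAddTwoDivX (N + 2) t = C t + C t * X ^ (N + 2)
      + ∑ p ∈ antidiagonal N, C (speyerGConv (p.2 + 1) (p.1 + 1) t) * X ^ (p.1 + 1) := by
    rw [hPolyAddTwoDivX, Nat.sum_antidiagonal_succ, Nat.sum_antidiagonal_succ']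
    dsimp only
    rw [speyerGConv_zero_left, speyerGConv_zero_right, pow_zero, mul_one, ← add_assoc]
  have hN1 : hPolyAddTwoDivX (N + 1) t = C t
      + ∑ p ∈ antidiagonal N, C (speyerGConv p.2 (p.1 + 1) t) * X ^ (p.1 + 1) := by
    rw [hPolyAddTwoDivX, Nat.sum_antidiagonal_succ, speyerGConv_zero_right, pow_zero, mul_one]
  have hXN1 : X * hPolyAddTwoDivX (N + 1) t = C t * X ^ (N + 2)
      + ∑ p ∈ antidiagonal N, C (speyerGConv (p.2 + 1) p.1 t) * X ^ (p.1 + 1) := by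
    rw [hPolyAddTwoDivX, Nat.sum_antidiagonal_succ', speyerGConv_zero_left, mul_add, mul_sum]
    simp only [mul_left_comm X, ← pow_succ']
  have hXN : C t * X * hPolyAddTwoDivX N t
      = ∑ p ∈ antidiagonal N, C (t * speyerGConv p.2 p.1 t) * X ^ (p.1 + 1) := by
    rw [hPolyAddTwoDivX, mul_sum]
    exact sum_congr rfl fun _ _ => by rw [C_mul]; ring
  simp only [speyerGConv_succ_succ, map_add, add_mul, sum_add_distrib] at hN2
  rw [hN2, add_mul, one_mul, hXN1, hXN, hN1]
  ring

theorem hPoly_rec (n : ℕ) (hn : 2 ≤ n) (t : ℝ) :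
    hPoly (n + 2) t = (1 + Polynomial.X) * hPoly (n + 1) t
      + Polynomial.C t * Polynomial.X * hPoly n t := by
  obtain ⟨N, rfl⟩ : ∃ N, n = N + 2 := ⟨n - 2, by omega⟩
  rw [hPoly_add_two (N + 2), hPolyAddTwoDivX_add_two, show N + 2 + 1 = N + 1 + 2 from rfl,
    hPoly_add_two (N + 1), hPoly_add_two N]
  ring
end

section
/- For every real t > 0 and every integer n ≥ 2, the polynomial h_n(x;t) in x has only real zeros. -/
open Polynomial Finset

/-!
Put `m = n - d - 1` and `e = d - 1`. Then `g_{n,d}(t)` is `t` times the coefficient of `X ^ e` in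
`(1 - X) ^ (-(m + 1)) * (1 + t X) ^ m`, and Pascal's rule in `m` yields the three-term recurrence
`h_{n+2} = (1 + x) h_{n+1} + t x h_n`. If `α + β = 1 + x` and `α β = -t x`, this solves to
`h_{k+2}(x) = t x ∑_{i ≤ k} α ^ i β ^ (k - i)`, so at a root `x ≠ 0` the ratio `ω = α / β` is a root
of unity. Then `(1 + x) ^ 2 = (α + β) ^ 2 = -(2 + 2 Re ω) t x` is a real quadratic equation for `x`
whose discriminant is nonnegative.
-/

theorem Finset.Nat.sum_Icc_one_eq_sum_antidiagonal {M : Type*} [AddCommMonoid M]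
    (f : ℕ → ℕ → M) (n : ℕ) :
    ∑ i ∈ Icc 1 (n + 1), f (n + 1 - i) (i - 1) = ∑ p ∈ antidiagonal n, f p.1 p.2 := by
  refine sum_nbij' (fun i ↦ (n + 1 - i, i - 1)) (fun p ↦ p.2 + 1) ?_ ?_ ?_ ?_ (fun _ _ ↦ rfl) <;>
    simp only [mem_Icc, HasAntidiagonal.mem_antidiagonal, Prod.forall, Prod.mk.injEq] <;> omega

theorem Finset.Nat.sum_antidiagonal_mul_pow_add_two {R : Type*} [CommRing R] {f : ℕ → ℕ → R}
    (c x : R) (hf : ∀ m e, f (m + 1) (e + 1) = f m (e + 1) + f (m + 1) e + c * f m e)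
    (hf_left : ∀ m, f (m + 1) 0 = f m 0) (hf_right : ∀ e, f 0 (e + 1) = f 0 e) (k : ℕ) :
    ∑ p ∈ antidiagonal (k + 2), f p.1 p.2 * x ^ p.2 =
      (1 + x) * ∑ p ∈ antidiagonal (k + 1), f p.1 p.2 * x ^ p.2 +
        c * x * ∑ p ∈ antidiagonal k, f p.1 p.2 * x ^ p.2 := by
  have h_first : ∑ p ∈ antidiagonal (k + 1), f p.1 p.2 * x ^ p.2 =
      f (k + 1) 0 + ∑ p ∈ antidiagonal k, f p.1 (p.2 + 1) * x ^ (p.2 + 1) := by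
    simp [sum_antidiagonal_succ']
  have h_last : ∑ p ∈ antidiagonal (k + 1), f p.1 p.2 * x ^ p.2 =
      f 0 (k + 1) * x ^ (k + 1) + ∑ p ∈ antidiagonal k, f (p.1 + 1) p.2 * x ^ p.2 :=
    sum_antidiagonal_succ
  have h_both : ∑ p ∈ antidiagonal (k + 2), f p.1 p.2 * x ^ p.2 =
      f 0 (k + 2) * x ^ (k + 2) + f (k + 2) 0 +
        ∑ p ∈ antidiagonal k, f (p.1 + 1) (p.2 + 1) * x ^ (p.2 + 1) := by
    rw [sum_antidiagonal_succ, sum_antidiagonal_succ']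
    simp only [pow_zero, mul_one, ← add_assoc]
  have h_inner : ∑ p ∈ antidiagonal k, f (p.1 + 1) (p.2 + 1) * x ^ (p.2 + 1) =
      ∑ p ∈ antidiagonal k, f p.1 (p.2 + 1) * x ^ (p.2 + 1) +
        x * ∑ p ∈ antidiagonal k, f (p.1 + 1) p.2 * x ^ p.2 +
          c * x * ∑ p ∈ antidiagonal k, f p.1 p.2 * x ^ p.2 := by
    simp only [hf, mul_sum, ← sum_add_distrib]
    exact sum_congr rfl fun _ _ ↦ by ring
  rw [h_both, h_inner]
  linear_combination hf_left (k + 1) + x ^ (k + 2) * hf_right (k + 1) - h_first - x * h_last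

theorem eq_mul_geom_sum₂_of_recurrence {R : Type*} [CommRing R] {u : ℕ → R} {x y c : R}
    (h0 : u 0 = c) (h1 : u 1 = c * (x + y))
    (h : ∀ n, u (n + 2) = (x + y) * u (n + 1) - x * y * u n) (n : ℕ) :
    u n = c * ∑ i ∈ range (n + 1), x ^ i * y ^ (n - i) := by
  induction n using Nat.twoStepInduction with
  | zero => simp [h0]
  | one => simp [h1, sum_range_succ, add_comm]
  | more n ih0 ih1 =>
    have e2 : ∑ i ∈ range (n + 3), x ^ i * y ^ (n + 2 - i) =
        x ^ (n + 2) + y * ∑ i ∈ range (n + 2), x ^ i * y ^ (n + 1 - i) :=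
      geom_sum₂_succ_eq x y
    have e1 : ∑ i ∈ range (n + 2), x ^ i * y ^ (n + 1 - i) =
        x ^ (n + 1) + y * ∑ i ∈ range (n + 1), x ^ i * y ^ (n - i) :=
      geom_sum₂_succ_eq x y
    rw [h, ih0, ih1, e2]
    linear_combination c * x * e1

theorem IsAlgClosed.exists_add_eq_and_mul_eq {K : Type*} [Field K] [IsAlgClosed K] (s p : K) :
    ∃ α β : K, α + β = s ∧ α * β = p := by
  obtain ⟨α, hα⟩ := IsAlgClosed.exists_root (C 1 * X ^ 2 + C (-s) * X + C p)
    (by rw [degree_quadratic one_ne_zero]; decide)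
  refine ⟨α, s - α, by ring, ?_⟩
  simp only [IsRoot, eval_add, eval_mul, eval_C, eval_pow, eval_X] at hα
  linear_combination -hα

theorem Complex.im_eq_zero_of_sq_add_mul_add_eq_zero {b c : ℝ} (hdisc : 4 * c ≤ b ^ 2) {z : ℂ}
    (hz : z ^ 2 + b * z + c = 0) : z.im = 0 := by
  have him := congrArg Complex.im hz
  have hre := congrArg Complex.re hz
  simp only [sq, Complex.add_im, Complex.mul_im, Complex.ofReal_re, Complex.ofReal_im,
    Complex.add_re, Complex.mul_re, Complex.zero_im, Complex.zero_re] at him hre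
  by_contra hne
  have hre_eq : 2 * z.re + b = 0 :=
    (mul_eq_zero.mp (by linear_combination him : z.im * (2 * z.re + b) = 0)).resolve_left hne
  nlinarith [mul_self_pos.mpr hne]

theorem Complex.one_add_sq_eq_of_norm_eq_one {ω : ℂ} (hω : ‖ω‖ = 1) :
    (1 + ω) ^ 2 = (2 + 2 * ω.re) * ω := by
  have h1 : ω * (starRingEnd ℂ) ω = 1 := by
    rw [Complex.mul_conj, Complex.normSq_eq_norm_sq, hω]; simp
  have h2 := Complex.add_conj ω
  push_cast at h2
  linear_combination ω * h2 - h1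

theorem Complex.im_eq_zero_of_pow_eq_pow {t : ℝ} (ht : 0 ≤ t) {z α β : ℂ}
    (hsum : α + β = 1 + z) (hprod : α * β = -(t * z)) (hβ : β ≠ 0) {n : ℕ} (hn : n ≠ 0)
    (hpow : α ^ n = β ^ n) : z.im = 0 := by
  obtain ⟨ω, rfl⟩ : ∃ ω, α = ω * β := ⟨α / β, (div_mul_cancel₀ α hβ).symm⟩
  have hω : ‖ω‖ = 1 := by
    refine Complex.norm_eq_one_of_pow_eq_one ?_ hn
    rwa [mul_pow, mul_eq_right₀ (pow_ne_zero n hβ)] at hpow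
  have hquad : z ^ 2 + ((2 + (2 + 2 * ω.re) * t : ℝ) : ℂ) * z + ((1 : ℝ) : ℂ) = 0 := by
    push_cast
    linear_combination -(1 + z + ω * β + β) * hsum + β ^ 2 * one_add_sq_eq_of_norm_eq_one hω +
      (2 + 2 * ω.re) * hprod
  refine im_eq_zero_of_sq_add_mul_add_eq_zero ?_ hquad
  have hre : -1 ≤ ω.re := by
    have := abs_re_le_norm ω
    rw [hω] at this
    exact neg_le_of_abs_le this
  nlinarith [mul_nonneg (by linarith : 0 ≤ 2 + 2 * ω.re) ht]

namespace PowerSeries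

/-- `(1 - X) ^ (-(m + 1)) * (1 + t X) ^ m`. -/
noncomputable def speyerSeries (t : ℝ) (m : ℕ) : ℝ⟦X⟧ :=
  mk (fun a ↦ ((m + a).choose a : ℝ)) * mk (fun b ↦ (m.choose b : ℝ) * t ^ b)

theorem speyerSeries_succ (t : ℝ) (m : ℕ) :
    speyerSeries t (m + 1) = (1 + C t * X) * speyerSeries t m + X * speyerSeries t (m + 1) := by
  have hA : mk (fun a ↦ ((m + 1 + a).choose a : ℝ)) =
      mk (fun a ↦ ((m + a).choose a : ℝ)) + X * mk (fun a ↦ ((m + 1 + a).choose a : ℝ)) := by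
    ext (_ | a)
    · simp
    · rw [map_add, coeff_succ_X_mul, coeff_mk, coeff_mk, coeff_mk,
        show m + 1 + (a + 1) = m + (a + 1) + 1 by ring, Nat.choose_succ_succ', Nat.cast_add,
        add_comm, show m + (a + 1) = m + 1 + a by ring]
  have hB : mk (fun b ↦ ((m + 1).choose b : ℝ) * t ^ b) =
      (1 + C t * X) * mk (fun b ↦ (m.choose b : ℝ) * t ^ b) := by
    ext (_ | b)
    · simp
    · rw [add_mul, one_mul, mul_assoc, map_add, coeff_C_mul, coeff_succ_X_mul, coeff_mk, coeff_mk,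
        coeff_mk, Nat.choose_succ_succ', Nat.cast_add]
      ring
  unfold speyerSeries
  linear_combination mk (fun b ↦ ((m + 1).choose b : ℝ) * t ^ b) * hA +
    mk (fun a ↦ ((m + a).choose a : ℝ)) * hB

theorem coeff_zero_speyerSeries (t : ℝ) (m : ℕ) : coeff 0 (speyerSeries t m) = 1 := by
  simp [speyerSeries]

theorem coeff_speyerSeries_zero (t : ℝ) (e : ℕ) : coeff e (speyerSeries t 0) = 1 := by
  have h : mk (fun b ↦ ((0 : ℕ).choose b : ℝ) * t ^ b) = 1 := by
    ext (_ | b) <;> simp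
  simp [speyerSeries, h]

end PowerSeries

/-- `g_{n,d}(t)` indexed by `m = n - d - 1` and `e = d - 1`, which range freely over `ℕ`. -/
noncomputable def speyerCoeff (t : ℝ) (m e : ℕ) : ℝ :=
  speyerG (m + e + 2) (e + 1) t

open PowerSeries in
theorem speyerCoeff_eq_mul_coeff_speyerSeries (t : ℝ) (m e : ℕ) :
    speyerCoeff t m e = t * coeff e (speyerSeries t m) := by
  simp only [speyerCoeff, speyerSeries, PowerSeries.coeff_mul, coeff_mk, mul_sum]
  rw [speyerG, ← Finset.Nat.sum_Icc_one_eq_sum_antidiagonal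
    (fun a b ↦ t * (((m + a).choose a : ℝ) * ((m.choose b : ℝ) * t ^ b)))]
  refine sum_congr rfl fun i hi ↦ ?_
  rw [mem_Icc] at hi
  obtain ⟨j, rfl⟩ : ∃ j, i = j + 1 := ⟨i - 1, by omega⟩
  simp only [Nat.add_sub_cancel]
  rw [show m + e + 2 - (j + 1) - 1 = m + (e - j) by omega, show e + 1 - (j + 1) = e - j by omega,
    show m + e + 2 - (e + 1) - 1 = m by omega]
  ring

theorem speyerCoeff_succ_succ (t : ℝ) (m e : ℕ) :
    speyerCoeff t (m + 1) (e + 1) =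
      speyerCoeff t m (e + 1) + speyerCoeff t (m + 1) e + t * speyerCoeff t m e := by
  have h := congrArg (PowerSeries.coeff (e + 1)) (PowerSeries.speyerSeries_succ t m)
  simp only [add_mul, one_mul, mul_assoc, map_add, PowerSeries.coeff_C_mul,
    PowerSeries.coeff_succ_X_mul] at h
  simp only [speyerCoeff_eq_mul_coeff_speyerSeries]
  linear_combination t * h

theorem speyerCoeff_zero_right (t : ℝ) (m : ℕ) : speyerCoeff t m 0 = t := by
  simp [speyerCoeff_eq_mul_coeff_speyerSeries, PowerSeries.coeff_zero_speyerSeries]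

theorem speyerCoeff_zero_left (t : ℝ) (e : ℕ) : speyerCoeff t 0 e = t := by
  simp [speyerCoeff_eq_mul_coeff_speyerSeries, PowerSeries.coeff_speyerSeries_zero]

theorem hPoly_add_two_s4 (t : ℝ) (k : ℕ) :
    hPoly (k + 2) t = X * ∑ p ∈ antidiagonal k, C (speyerCoeff t p.1 p.2) * X ^ p.2 := by
  rw [hPoly, mul_sum, show k + 2 - 1 = k + 1 by omega,
    ← Finset.Nat.sum_Icc_one_eq_sum_antidiagonal (fun a b ↦ X * (C (speyerCoeff t a b) * X ^ b))]
  refine sum_congr rfl fun d hd ↦ ?_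
  rw [mem_Icc] at hd
  obtain ⟨e, rfl⟩ : ∃ e, d = e + 1 := ⟨d - 1, by omega⟩
  rw [speyerCoeff, Nat.add_sub_cancel, show k + 1 - (e + 1) + e + 2 = k + 2 by omega]
  ring

theorem aeval_hPoly_add_two (t : ℝ) (k : ℕ) {z α β : ℂ} (hsum : α + β = 1 + z)
    (hprod : α * β = -(t * z)) :
    aeval z (hPoly (k + 2) t) = t * z * ∑ i ∈ range (k + 1), α ^ i * β ^ (k - i) := by
  obtain ⟨u, hu⟩ : ∃ u : ℕ → ℂ,
      ∀ j, u j = ∑ p ∈ antidiagonal j, (speyerCoeff t p.1 p.2 : ℂ) * z ^ p.2 := ⟨_, fun _ ↦ rfl⟩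
  have h_rec (j : ℕ) : u (j + 2) = (α + β) * u (j + 1) - α * β * u j := by
    rw [hsum, hprod, hu, hu, hu, Finset.Nat.sum_antidiagonal_mul_pow_add_two
      (f := fun m e ↦ (speyerCoeff t m e : ℂ)) t z
      (fun m e ↦ by rw [speyerCoeff_succ_succ]; push_cast; ring)
      (fun m ↦ by rw [speyerCoeff_zero_right, speyerCoeff_zero_right])
      (fun e ↦ by rw [speyerCoeff_zero_left, speyerCoeff_zero_left])]
    ring
  have h0 : u 0 = t := by simp [hu, speyerCoeff_zero_right]
  have h1 : u 1 = t * (α + β) := by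
    simp [hu, Finset.Nat.sum_antidiagonal_succ, speyerCoeff_zero_left, speyerCoeff_zero_right, hsum]
    ring
  calc aeval z (hPoly (k + 2) t) = z * u k := by simp [hPoly_add_two_s4, hu]
    _ = _ := by rw [eq_mul_geom_sum₂_of_recurrence h0 h1 h_rec k]; ring

theorem hPoly_real_rooted (t : ℝ) (ht : 0 < t) (n : ℕ) (hn : 2 ≤ n) :
    ∀ z : ℂ, Polynomial.aeval z (hPoly n t) = 0 → z.im = 0 := by
  intro z hz
  obtain ⟨k, rfl⟩ := Nat.exists_eq_add_of_le' hn
  rcases eq_or_ne z 0 with rfl | hz0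
  · simp
  obtain ⟨α, β, hsum, hprod⟩ := IsAlgClosed.exists_add_eq_and_mul_eq (1 + z) (-(t * z))
  have htz : (t : ℂ) * z ≠ 0 := mul_ne_zero (by exact_mod_cast ht.ne') hz0
  rw [aeval_hPoly_add_two t k hsum hprod, mul_eq_zero, or_iff_right htz] at hz
  have hpow : α ^ (k + 1) = β ^ (k + 1) := by
    rw [← sub_eq_zero, ← geom_sum₂_mul, Nat.add_sub_cancel, hz, zero_mul]
  have hβ : β ≠ 0 := by
    rintro rfl
    exact htz (by linear_combination hprod)
  exact Complex.im_eq_zero_of_pow_eq_pow ht.le hsum hprod hβ k.succ_ne_zero hpow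
end

section
/- For n ≥ 4, the sequence (g_{n,d}(1))_{d=1}^{n-1} is log-concave, where g_{n,d}(1) = ∑_{i=1}^{d} C(n-i-1, d-i)·C(n-d-1, i-1). -/
/-!
`g_{n,d}(1)` is the Delannoy number `D(d - 1, n - d - 1)`. For fixed `b`, the series
`F_b = ∑ₐ D(a, b) xᵃ` is `(1 + x) ^ b / (1 - x) ^ (b + 1)`: the coefficients of this product are
the binomial sums defining `g`, and `(1 - x) F_{b+1} = (1 + x) F_b` is Delannoy's recurrence
`D(a+1, b+1) = D(a, b+1) + D(a+1, b) + D(a, b)`.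
Log-concavity along the antidiagonals of the Delannoy array comes from the cross inequality
`D(x, y+2) D(x+1, y) ≤ D(x, y+1) D(x+1, y+1)`, proved by induction on `x + y`: expanding it by
the recurrence leaves its mirror image and log-concavity at level `x + y - 1`, and log-concavity
at a level is the product of the cross inequality and its mirror image there.
-/

open Finset

/-- `g_{n,d}(1)`, the Speyer g-polynomial of `U_{n,d}` evaluated at `t = 1`. -/
def speyerGOne (n d : ℕ) : ℕ :=
  ∑ i ∈ Finset.Icc 1 d, (n - i - 1).choose (d - i) * (n - d - 1).choose (i - 1)

def delannoy : ℕ → ℕ → ℕ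
  | 0, _ => 1
  | _ + 1, 0 => 1
  | a + 1, b + 1 => delannoy a (b + 1) + delannoy (a + 1) b + delannoy a b

@[simp] lemma delannoy_zero_left (b : ℕ) : delannoy 0 b = 1 := by
  rw [delannoy]

@[simp] lemma delannoy_zero_right (a : ℕ) : delannoy a 0 = 1 := by
  cases a <;> rw [delannoy]

lemma delannoy_succ_succ (a b : ℕ) :
    delannoy (a + 1) (b + 1) = delannoy a (b + 1) + delannoy (a + 1) b + delannoy a b := by
  rw [delannoy]

lemma delannoy_pos (a b : ℕ) : 0 < delannoy a b := by
  match a, b with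
  | 0, _ => simp
  | _ + 1, 0 => simp
  | a + 1, b + 1 =>
    rw [delannoy_succ_succ]
    exact Nat.add_pos_right _ (delannoy_pos a b)

lemma delannoy_comm (a b : ℕ) : delannoy a b = delannoy b a := by
  match a, b with
  | 0, _ => simp
  | _ + 1, 0 => simp
  | a + 1, b + 1 =>
    rw [delannoy_succ_succ, delannoy_succ_succ, delannoy_comm a (b + 1), delannoy_comm (a + 1) b,
      delannoy_comm a b, add_comm (delannoy (b + 1) a)]

lemma delannoy_le_succ_right (a b : ℕ) : delannoy a b ≤ delannoy a (b + 1) := by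
  cases a with
  | zero => simp
  | succ a => rw [delannoy_succ_succ]; omega

section GeneratingFunction

open PowerSeries

noncomputable def delannoySeries (b : ℕ) : ℕ⟦X⟧ :=
  (1 + X) ^ b * PowerSeries.mk fun n ↦ (b + n).choose n

lemma mk_choose_add_succ (b : ℕ) :
    (PowerSeries.mk fun n ↦ (b + 1 + n).choose n : ℕ⟦X⟧) =
      X * (PowerSeries.mk fun n ↦ (b + 1 + n).choose n) +
        PowerSeries.mk fun n ↦ (b + n).choose n := by
  ext (_ | n)
  · simp
  · simp only [map_add, coeff_succ_X_mul, coeff_mk]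
    rw [show b + 1 + (n + 1) = b + 1 + n + 1 by ring, show b + (n + 1) = b + 1 + n by ring,
      Nat.choose_succ_succ']

lemma delannoySeries_succ (b : ℕ) :
    delannoySeries (b + 1) = X * delannoySeries (b + 1) + (1 + X) * delannoySeries b := by
  conv_lhs => rw [delannoySeries, mk_choose_add_succ]
  rw [delannoySeries, delannoySeries]
  ring

lemma coeff_delannoySeries (a b : ℕ) : coeff a (delannoySeries b) = delannoy a b := by
  match a, b with
  | 0, b => simp [delannoySeries]
  | a + 1, 0 => simp [delannoySeries]
  | a + 1, b + 1 =>
    rw [delannoySeries_succ, delannoy_succ_succ]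
    simp only [map_add, coeff_succ_X_mul, add_mul, one_mul]
    rw [coeff_delannoySeries a (b + 1), coeff_delannoySeries (a + 1) b, coeff_delannoySeries a b,
      add_assoc]
termination_by a + b

lemma delannoy_eq_sum_antidiagonal (a b : ℕ) :
    delannoy a b = ∑ p ∈ antidiagonal a, b.choose p.1 * (b + p.2).choose p.2 := by
  have h : ((1 + X) ^ b : ℕ⟦X⟧) = ((1 + Polynomial.X) ^ b : Polynomial ℕ) := by simp
  rw [← coeff_delannoySeries, delannoySeries, coeff_mul, h]
  simp only [Polynomial.coeff_coe, coeff_mk, Polynomial.coeff_one_add_X_pow, Nat.cast_id]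

end GeneratingFunction

lemma speyerGOne_eq_delannoy (a b : ℕ) : speyerGOne (a + b + 2) (a + 1) = delannoy a b := by
  rw [delannoy_eq_sum_antidiagonal, speyerGOne]
  refine sum_nbij' (fun i ↦ (i - 1, a + 1 - i)) (fun p ↦ p.1 + 1) ?_ ?_ ?_ ?_ ?_
  · intro i hi
    simp only [mem_Icc, HasAntidiagonal.mem_antidiagonal] at hi ⊢
    omega
  · intro p hp
    simp only [mem_Icc, HasAntidiagonal.mem_antidiagonal] at hp ⊢
    omega
  · intro i hi
    simp only [mem_Icc] at hi
    omega
  · intro p hp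
    simp only [HasAntidiagonal.mem_antidiagonal] at hp
    ext <;> simp only [add_tsub_cancel_right]; omega
  · intro i hi
    simp only [mem_Icc] at hi
    rw [mul_comm, show a + b + 2 - i - 1 = b + (a + 1 - i) by omega,
      show a + b + 2 - (a + 1) - 1 = b by omega]

lemma Nat.mul_le_sq_of_mul_le_mul {p q e f a : ℕ} (hpq : 0 < p * q) (he : e * q ≤ p * a)
    (hf : f * p ≤ q * a) : e * f ≤ a ^ 2 := by
  refine Nat.le_of_mul_le_mul_left ?_ hpq
  calc p * q * (e * f) = (e * q) * (f * p) := by ring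
    _ ≤ (p * a) * (q * a) := Nat.mul_le_mul he hf
    _ = p * q * a ^ 2 := by ring

lemma delannoy_cross_le (x y : ℕ) :
    delannoy x (y + 2) * delannoy (x + 1) y ≤ delannoy x (y + 1) * delannoy (x + 1) (y + 1) := by
  match x with
  | 0 => simpa using delannoy_le_succ_right 1 y
  | u + 1 =>
    have hmirror := delannoy_cross_le y u
    simp only [delannoy_comm y, delannoy_comm (y + 1)] at hmirror
    have hsq : delannoy u (y + 2) * delannoy (u + 2) y ≤ delannoy (u + 1) (y + 1) ^ 2 :=
      Nat.mul_le_sq_of_mul_le_mul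
        (Nat.mul_pos (delannoy_pos u (y + 1)) (delannoy_pos (u + 1) y)) (delannoy_cross_le u y)
        (by linarith)
    rw [delannoy_succ_succ (u + 1) y, delannoy_succ_succ u (y + 1)]
    linarith
termination_by x + y

lemma delannoy_mul_le_sq (x y : ℕ) :
    delannoy x (y + 2) * delannoy (x + 2) y ≤ delannoy (x + 1) (y + 1) ^ 2 := by
  have hmirror := delannoy_cross_le y x
  simp only [delannoy_comm y, delannoy_comm (y + 1)] at hmirror
  exact Nat.mul_le_sq_of_mul_le_mul
    (Nat.mul_pos (delannoy_pos x (y + 1)) (delannoy_pos (x + 1) y)) (delannoy_cross_le x y)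
    (by linarith)

theorem speyerGOne_log_concave_general (n : ℕ) :
    ∀ d : ℕ, 2 ≤ d → d ≤ n - 2 →
      speyerGOne n (d - 1) * speyerGOne n (d + 1) ≤ (speyerGOne n d) ^ 2 := by
  intro d hd hdn
  obtain ⟨x, rfl⟩ : ∃ x, d = x + 2 := ⟨d - 2, by omega⟩
  obtain ⟨y, rfl⟩ : ∃ y, n = x + y + 4 := ⟨n - x - 4, by omega⟩
  have key := delannoy_mul_le_sq x y
  rw [← speyerGOne_eq_delannoy, ← speyerGOne_eq_delannoy, ← speyerGOne_eq_delannoy] at key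
  convert key using 3 <;> omega

theorem speyerGOne_log_concave (n : ℕ) (hn : 4 ≤ n) :
    ∀ d : ℕ, 2 ≤ d → d ≤ n - 2 →
      speyerGOne n (d - 1) * speyerGOne n (d + 1) ≤ (speyerGOne n d) ^ 2 :=
  speyerGOne_log_concave_general n
end

section
/- For every real t and every n ≥ 2, the polynomial h_n(x;t) is palindromic of darga n: writing h_n(x;t) = ∑_{d=1}^{n-1} g_{n,d}(t) x^d, we have g_{n,1+k}(t) = g_{n,n-1-k}(t) for all 0 ≤ k ≤ n-2; equivalently x^n · h_n(1/x; t) = h_n(x;t). -/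
open Polynomial Finset

/-!
With `a = i - 1`, `b = d - i`, `c = n - d - i`, the `i`-th coefficient of `g_{n,d}` is
`C(a+b+c, b) · C(a+c, a)`, the trinomial coefficient `(a+b+c)! / (a! b! c!)`. Replacing `d` by
`n - d` swaps `b` and `c`, so the coefficients agree once both sums are cut off at
`i ≤ min d (n - d)`, beyond which the factor `C(n-d-1, i-1)` vanishes.
-/

theorem Nat.add_add_choose_mul_choose_comm (a b c : ℕ) :
    (a + b + c).choose b * (a + c).choose a = (a + b + c).choose c * (a + b).choose a := by
  have trinomial : ∀ b c : ℕ,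
      (a + b + c).choose b * (a + c).choose a = (a + b + c).choose a * (b + c).choose c := by
    intro b c
    rw [Nat.choose_symm_of_eq_add (by ring : a + b + c = b + (a + c)),
      Nat.choose_mul (Nat.le_add_right a c)]
    congr 2 <;> omega
  rw [trinomial, add_right_comm, trinomial, add_comm c b, Nat.choose_symm_add]

theorem speyerG_eq_sum_Icc_min (t : ℝ) {n d : ℕ} (hd : d < n) :
    speyerG n d t = ∑ i ∈ Icc 1 (min d (n - d)),
      ((n - i - 1).choose (d - i) : ℝ) * ((n - d - 1).choose (i - 1) : ℝ) * t ^ i := by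
  refine (sum_subset (Icc_subset_Icc_right (min_le_left _ _)) fun i hi hi' => ?_).symm
  simp only [mem_Icc, le_min_iff, not_and_or, not_le] at hi hi'
  rw [Nat.choose_eq_zero_of_lt (by omega : n - d - 1 < i - 1)]
  simp

theorem speyerG_symm (t : ℝ) {n d : ℕ} (hd₀ : 0 < d) (hd : d < n) :
    speyerG n (n - d) t = speyerG n d t := by
  rw [speyerG_eq_sum_Icc_min t hd, speyerG_eq_sum_Icc_min t (by omega : n - d < n),
    Nat.sub_sub_self hd.le, min_comm]
  refine sum_congr rfl fun i hi => ?_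
  rw [mem_Icc, le_min_iff] at hi
  have key := Nat.add_add_choose_mul_choose_comm (i - 1) (d - i) (n - d - i)
  rw [show i - 1 + (d - i) + (n - d - i) = n - i - 1 by omega,
    show i - 1 + (n - d - i) = n - d - 1 by omega, show i - 1 + (d - i) = d - 1 by omega] at key
  rw [← Nat.cast_mul, ← Nat.cast_mul, key, Nat.sub_right_comm n d i]

theorem hPoly_palindromic (t : ℝ) (n : ℕ) (hn : 2 ≤ n) :
    ∀ k : ℕ, k ≤ n - 2 → speyerG n (1 + k) t = speyerG n (n - 1 - k) t := by
  intro k hk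
  rw [Nat.sub_sub, ← speyerG_symm t (by omega) (by omega : 1 + k < n)]
end

section
/- For every n ≥ 2 there exist coefficients γ_{n,i} (functions of t) such that h_n(x;t) = ∑_{i=0}^{⌊n/2⌋} γ_{n,i} x^i (1+x)^{n-2i}, where the γ_{n,i} satisfy γ_{n,i} = γ_{n-1,i} + t·γ_{n-2,i-1} for n ≥ 4, with initial conditions γ_{2,0} = γ_{3,0} = 0, γ_{2,1} = γ_{3,1} = t, and conventions γ_{n,-1} = γ_{n,⌊n/2⌋+1} = 0. -/
open Polynomial Finset

/-! Explicitly `γ_{n,i} = t^i · C(n-i-1, i-1)` for `i ≥ 1` and `γ_{n,0} = 0`, so the recurrence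
for `γ` is Pascal's rule. Comparing coefficients of `x^d`, the `t^i`-part of `g_{n,d}(t)` is
`C(n-i-1, d-i) · C(n-d-1, i-1)` and that of the `γ`-expansion is `C(n-i-1, i-1) · C(n-2i, d-i)`;
both count the ways to split `n-i-1` objects into blocks of sizes `i-1`, `d-i` and the rest. -/

theorem Nat.choose_mul_choose_sub_comm (N a b : ℕ) :
    N.choose a * (N - a).choose b = N.choose b * (N - b).choose a := by
  by_cases h : a + b ≤ N
  · have ha := Nat.choose_mul (n := N) (Nat.le_add_right a b)
    have hb := Nat.choose_mul (n := N) (Nat.le_add_left b a)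
    rw [Nat.add_sub_cancel_left] at ha
    rw [Nat.add_sub_cancel] at hb
    rw [← ha, ← hb, Nat.choose_symm_add]
  · have zero_of_lt : ∀ a b, N < a + b → N.choose a * (N - a).choose b = 0 := fun a b hab ↦ by
      rcases le_or_gt a N with ha | ha
      · rw [Nat.choose_eq_zero_of_lt (n := N - a) (by omega), mul_zero]
      · rw [Nat.choose_eq_zero_of_lt ha, zero_mul]
    rw [zero_of_lt a b (by omega), zero_of_lt b a (by omega)]

theorem Polynomial.coeff_C_mul_X_pow_mul_one_add_X_pow {R : Type*} [Semiring R]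
    (a : R) (i m d : ℕ) :
    (C a * X ^ i * (1 + X) ^ m).coeff d = if i ≤ d then a * m.choose (d - i) else 0 := by
  rw [mul_assoc, coeff_C_mul, coeff_X_pow_mul', coeff_one_add_X_pow]
  split_ifs <;> simp

noncomputable def gammaCoeff (t : ℝ) (n : ℕ) : ℕ → ℝ
  | 0 => 0
  | i + 1 => t ^ (i + 1) * ((n - i - 2).choose i : ℝ)

section

variable (t : ℝ)

theorem gammaCoeff_eq_zero_of_lt {n i : ℕ} (hn : 2 ≤ n) (hi : n / 2 < i) :
    gammaCoeff t n i = 0 := by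
  obtain ⟨k, rfl⟩ : ∃ k, i = k + 1 := ⟨i - 1, by omega⟩
  simp [gammaCoeff, Nat.choose_eq_zero_of_lt (show n - k - 2 < k by omega)]

theorem gammaCoeff_add_two {n i : ℕ} (hi : i ≤ n) :
    gammaCoeff t (n + 2) i = gammaCoeff t (n + 1) i + t * gammaCoeff t n (i - 1) := by
  match i with
  | 0 => simp [gammaCoeff]
  | 1 => simp [gammaCoeff]
  | k + 2 =>
    obtain ⟨m, hsub⟩ : ∃ m, n - k - 2 = m ∧ n + 2 - (k + 1) - 2 = m + 1 ∧ n + 1 - (k + 1) - 2 = m :=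
      ⟨n - k - 2, by omega⟩
    rw [show k + 2 - 1 = k + 1 from rfl]
    simp only [gammaCoeff, hsub, Nat.choose_succ_succ', Nat.cast_add]
    ring

theorem speyerG_eq_zero_of_le {n d : ℕ} (hn : 2 ≤ n) (hd : n ≤ d) : speyerG n d t = 0 := by
  refine sum_eq_zero fun i hi ↦ ?_
  have hi := mem_Icc.1 hi
  rcases (show n - i - 1 < d - i ∨ n - d - 1 < i - 1 by omega) with h | h <;>
    simp [Nat.choose_eq_zero_of_lt h]

theorem coeff_hPoly {n : ℕ} (hn : 2 ≤ n) (d : ℕ) : (hPoly n t).coeff d = speyerG n d t := by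
  simp only [hPoly, finsetSum_coeff, coeff_C_mul_X_pow, sum_ite_eq, mem_Icc]
  split_ifs with hd
  · rfl
  · rcases Nat.eq_zero_or_pos d with rfl | hd'
    · simp [speyerG]
    · exact (speyerG_eq_zero_of_le t hn (by omega)).symm

theorem gammaCoeff_mul_choose {n d i : ℕ} (hi : i ∈ Icc 1 d) :
    gammaCoeff t n i * (n - 2 * i).choose (d - i) =
      ((n - i - 1).choose (d - i) : ℝ) * ((n - d - 1).choose (i - 1) : ℝ) * t ^ i := by
  obtain ⟨k, rfl⟩ : ∃ k, i = k + 1 := ⟨i - 1, by have := (mem_Icc.1 hi).1; omega⟩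
  have hi := mem_Icc.1 hi
  have key := Nat.choose_mul_choose_sub_comm (n - k - 2) k (d - (k + 1))
  rw [show n - k - 2 - k = n - 2 * (k + 1) by omega,
    show n - k - 2 - (d - (k + 1)) = n - d - 1 by omega] at key
  rw [show n - (k + 1) - 1 = n - k - 2 by omega, Nat.add_sub_cancel]
  simp only [gammaCoeff]
  rw [mul_assoc, ← Nat.cast_mul, key, Nat.cast_mul]
  ring

theorem sum_gammaCoeff_mul_choose {n : ℕ} (hn : 2 ≤ n) (d : ℕ) :
    ∑ i ∈ range (n / 2 + 1),
      (if i ≤ d then gammaCoeff t n i * (n - 2 * i).choose (d - i) else 0) = speyerG n d t := by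
  refine sum_congr_of_eq_on_inter (fun i _ hi ↦ ?_) (fun i hi hi' ↦ ?_)
    (fun i _ hi ↦ by rw [if_pos (mem_Icc.1 hi).2, gammaCoeff_mul_choose t hi])
  · rcases Nat.eq_zero_or_pos i with rfl | hi0
    · simp [gammaCoeff]
    · rw [if_neg (by simp only [mem_Icc] at hi; omega)]
  · simp only [mem_Icc, mem_range] at hi hi'
    simp [Nat.choose_eq_zero_of_lt (show n - d - 1 < i - 1 by omega)]

end

theorem hPoly_gamma_expansion (t : ℝ) :
    ∃ γ : ℕ → ℤ → ℝ,
      (∀ n : ℕ, 2 ≤ n →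
        hPoly n t = ∑ i ∈ Finset.range (n / 2 + 1),
          Polynomial.C (γ n i) * Polynomial.X ^ i * (1 + Polynomial.X) ^ (n - 2 * i)) ∧
      γ 2 0 = 0 ∧ γ 3 0 = 0 ∧ γ 2 1 = t ∧ γ 3 1 = t ∧
      (∀ n : ℕ, 2 ≤ n → γ n (-1) = 0 ∧ γ n ((n / 2 : ℕ) + 1) = 0) ∧
      (∀ n : ℕ, 4 ≤ n → ∀ i : ℤ, 0 ≤ i → i ≤ ((n / 2 : ℕ) : ℤ) →
        γ n i = γ (n - 1) i + t * γ (n - 2) (i - 1)) := by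
  refine ⟨fun n i ↦ gammaCoeff t n i.toNat, fun n hn ↦ ?_, rfl, rfl, by simp [gammaCoeff],
    by simp [gammaCoeff], fun n hn ↦ ⟨rfl, ?_⟩, fun n hn i hi0 hi ↦ ?_⟩
  · ext d
    simp only [coeff_hPoly t hn, finsetSum_coeff, Int.toNat_natCast,
      coeff_C_mul_X_pow_mul_one_add_X_pow, sum_gammaCoeff_mul_choose t hn]
  · exact gammaCoeff_eq_zero_of_lt t hn (by omega)
  · lift i to ℕ using hi0
    obtain ⟨m, rfl⟩ : ∃ m, n = m + 2 := ⟨n - 2, by omega⟩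
    simp only [Int.toNat_natCast, show ((i : ℤ) - 1).toNat = i - 1 by omega]
    exact gammaCoeff_add_two t (by omega)
end

section
/- For t > 0, the sequence f_n = h_n(1;t) satisfies f_{n+2} = 2f_{n+1} + t·f_n for n ≥ 2, and the ratio f_{n+1}/f_n converges to 1 + √(t+1) as n → ∞. -/
open Polynomial Finset

/-!
Swapping the two sums in `h_{m+2}(1;t)` and summing over `d` by trinomial revision gives
`f_{m+2} = t · ∑_k C(m-k,k) 2^{m-2k} t^k`, a bivariate Fibonacci polynomial in `(2, t)`, which
satisfies `a_{m+2} = 2 a_{m+1} + t a_m` by Pascal's rule. The characteristic roots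
`1 ± √(t+1)` differ in absolute value and the initial values `a_0 = 1`, `a_1 = 2` have a nonzero
component along the dominant root `1 + √(t+1)`, so the ratio of consecutive terms tends to it.
-/

open Filter Topology

namespace Nat

theorem choose_mul_choose_sub_comm_s15 (m e k : ℕ) :
    m.choose e * (m - e).choose k = m.choose k * (m - k).choose e := by
  rcases le_or_gt (e + k) m with h | h
  · have he := choose_mul (n := m) (k := e + k) (s := e) (by omega)
    have hk := choose_mul (n := m) (k := e + k) (s := k) (by omega)
    rw [choose_symm_add, Nat.add_sub_cancel_left] at he
    rw [Nat.add_sub_cancel] at hk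
    rw [← he, hk]
  rcases lt_or_ge m e with he | he
  · rw [choose_eq_zero_of_lt he, choose_eq_zero_of_lt (by omega : m - k < e), zero_mul, mul_zero]
  rcases lt_or_ge m k with hk | hk
  · rw [choose_eq_zero_of_lt hk, choose_eq_zero_of_lt (by omega : m - e < k), zero_mul, mul_zero]
  rw [choose_eq_zero_of_lt (by omega : m - e < k), choose_eq_zero_of_lt (by omega : m - k < e),
    mul_zero, mul_zero]

theorem sum_range_choose_mul_choose_sub (m k : ℕ) :
    ∑ e ∈ range (m + 1), m.choose e * (m - e).choose k = m.choose k * 2 ^ (m - k) := by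
  simp_rw [choose_mul_choose_sub_comm_s15 m _ k, ← mul_sum, ← sum_range_choose (m - k)]
  congr 1
  refine (sum_subset (range_subset_range.2 (by omega)) fun e _ he => ?_).symm
  exact choose_eq_zero_of_lt (by simp at he; omega)

theorem sum_Icc_choose_sub_mul_choose_sub {i N : ℕ} (hi : i ≤ N) (k : ℕ) :
    ∑ d ∈ Icc i N, (N - i).choose (d - i) * (N - d).choose k =
      (N - i).choose k * 2 ^ (N - i - k) := by
  rw [← sum_range_choose_mul_choose_sub, ← Ico_add_one_right_eq_Icc, sum_Ico_eq_sum_range,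
    show N + 1 - i = N - i + 1 by omega]
  refine sum_congr rfl fun e _ => ?_
  rw [Nat.add_sub_cancel_left, Nat.sub_sub]

end Nat

section FibPoly

variable {R : Type*} [CommSemiring R]

/-- Terms with `p.2 > p.1` vanish, so the truncated `p.1 - p.2` is harmless;
`fibPoly 1 1 m = Nat.fib (m + 1)` by `Nat.fib_succ_eq_sum_choose`. -/
def fibPoly (x y : R) (m : ℕ) : R :=
  ∑ p ∈ antidiagonal m, (p.1.choose p.2 : R) * x ^ (p.1 - p.2) * y ^ p.2

@[simp] theorem fibPoly_zero (x y : R) : fibPoly x y 0 = 1 := by simp [fibPoly]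

@[simp] theorem fibPoly_one (x y : R) : fibPoly x y 1 = x := by
  simp [fibPoly, Nat.antidiagonal_succ]

theorem fibPoly_add_two (x y : R) (m : ℕ) :
    fibPoly x y (m + 2) = x * fibPoly x y (m + 1) + y * fibPoly x y m := by
  -- Pascal's rule `C(i+1, j+1) = C(i, j) + C(i, j+1)` splits the interior terms between the sums.
  have hpow : ∀ i j : ℕ, (i.choose (j + 1) : R) * x ^ (i - j) =
      x * ((i.choose (j + 1) : R) * x ^ (i - (j + 1))) := by
    intro i j
    rcases lt_or_ge i (j + 1) with h | h
    · simp [Nat.choose_eq_zero_of_lt h]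
    · rw [show i - j = i - (j + 1) + 1 by omega, pow_succ]
      ring
  simp only [fibPoly, Nat.antidiagonal_succ_succ', Nat.antidiagonal_succ', sum_cons, sum_map]
  simp [Nat.choose_succ_succ, hpow, add_mul, sum_add_distrib, pow_succ]
  rw [mul_add, mul_sum, mul_sum]
  simp only [mul_comm, mul_assoc, mul_left_comm]
  abel

theorem fibPoly_eq_sum_range (x y : R) (m : ℕ) :
    fibPoly x y m = ∑ j ∈ range (m + 1), ((m - j).choose j : R) * x ^ (m - j - j) * y ^ j := by
  rw [fibPoly, ← Nat.sum_antidiagonal_swap, Nat.sum_antidiagonal_eq_sum_range_succ_mk]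
  rfl

end FibPoly

theorem hPoly_eval_one (n : ℕ) (t : ℝ) :
    (hPoly n t).eval 1 = ∑ d ∈ Icc 1 (n - 1), speyerG n d t := by
  simp [hPoly, eval_finsetSum]

theorem sum_speyerG_add_two (m : ℕ) (t : ℝ) :
    ∑ d ∈ Icc 1 (m + 1), speyerG (m + 2) d t = t * fibPoly 2 t m := by
  calc ∑ d ∈ Icc 1 (m + 1), speyerG (m + 2) d t
      = ∑ i ∈ Icc 1 (m + 1), ∑ d ∈ Icc i (m + 1),
          ((m + 1 - i).choose (d - i) * (m + 1 - d).choose (i - 1) : ℕ) * t ^ i := by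
        simp only [speyerG, Nat.cast_mul, show ∀ j, m + 2 - j - 1 = m + 1 - j by omega]
        exact sum_comm' fun d i => by simp only [mem_Icc]; omega
    _ = ∑ i ∈ Icc 1 (m + 1),
          ((m + 1 - i).choose (i - 1) * 2 ^ (m + 1 - i - (i - 1)) : ℕ) * t ^ i := by
        refine sum_congr rfl fun i hi => ?_
        rw [← sum_mul, ← Nat.cast_sum, Nat.sum_Icc_choose_sub_mul_choose_sub (mem_Icc.1 hi).2]
    _ = ∑ j ∈ range (m + 1), ((m - j).choose j * 2 ^ (m - j - j) : ℕ) * t ^ (j + 1) := by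
        rw [← Ico_add_one_right_eq_Icc, sum_Ico_eq_sum_range]
        refine sum_congr rfl fun j _ => ?_
        rw [show m + 1 - (1 + j) = m - j by omega, Nat.add_sub_cancel_left, add_comm 1 j]
    _ = t * fibPoly 2 t m := by
        rw [fibPoly_eq_sum_range, mul_sum]
        refine sum_congr rfl fun j _ => ?_
        push_cast
        ring

section LinearRecurrence

variable {R : Type*} [CommRing R] {u : ℕ → R} {r q : R}

theorem sub_mul_eq_pow_mul_of_recurrence
    (hu : ∀ n, u (n + 2) = (r + q) * u (n + 1) - r * q * u n) (n : ℕ) :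
    u (n + 1) - q * u n = r ^ n * (u 1 - q * u 0) := by
  induction n with
  | zero => ring
  | succ n ih =>
    rw [hu, pow_succ]
    linear_combination r * ih

theorem sub_mul_eq_of_recurrence (hu : ∀ n, u (n + 2) = (r + q) * u (n + 1) - r * q * u n)
    (n : ℕ) : (r - q) * u n = (u 1 - q * u 0) * r ^ n - (u 1 - r * u 0) * q ^ n := by
  have hr := sub_mul_eq_pow_mul_of_recurrence hu n
  have hq := sub_mul_eq_pow_mul_of_recurrence (u := u) (r := q) (q := r)
    (fun n => by rw [hu, add_comm, mul_comm r]) n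
  linear_combination hr - hq

end LinearRecurrence

section Ratio

variable {𝕜 : Type*} [NormedField 𝕜] {r q : 𝕜}

theorem tendsto_succ_div_of_norm_lt {A B : 𝕜} (hA : A ≠ 0) (hqr : ‖q‖ < ‖r‖) :
    Tendsto (fun n : ℕ => (A * r ^ (n + 1) - B * q ^ (n + 1)) / (A * r ^ n - B * q ^ n))
      atTop (𝓝 r) := by
  have hr : r ≠ 0 := norm_pos_iff.1 ((norm_nonneg q).trans_lt hqr)
  have hx : Tendsto (fun n : ℕ => (q / r) ^ n) atTop (𝓝 0) :=
    tendsto_pow_atTop_nhds_zero_of_norm_lt_one <| by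
      rwa [norm_div, div_lt_one (hqr.trans_le' (norm_nonneg q))]
  have hlim := ((tendsto_const_nhds (x := A * r)).sub (hx.const_mul (B * q))).div
    ((tendsto_const_nhds (x := A)).sub (hx.const_mul B)) (by simpa using hA)
  rw [mul_zero, mul_zero, sub_zero, sub_zero, mul_div_cancel_left₀ r hA] at hlim
  refine hlim.congr fun n => ?_
  simp only [Pi.div_apply, div_pow]
  rw [← mul_div_mul_left _ _ (pow_ne_zero n hr)]
  congr 1 <;> field_simp
  ring

theorem tendsto_succ_div_of_recurrence {u : ℕ → 𝕜}
    (hu : ∀ n, u (n + 2) = (r + q) * u (n + 1) - r * q * u n) (hqr : ‖q‖ < ‖r‖)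
    (h01 : u 1 ≠ q * u 0) : Tendsto (fun n => u (n + 1) / u n) atTop (𝓝 r) := by
  have hrq : r - q ≠ 0 := sub_ne_zero.2 fun h => hqr.ne (h ▸ rfl)
  refine (tendsto_succ_div_of_norm_lt (B := u 1 - r * u 0) (sub_ne_zero.2 h01) hqr).congr
    fun n => ?_
  rw [← sub_mul_eq_of_recurrence hu, ← sub_mul_eq_of_recurrence hu, mul_div_mul_left _ _ hrq]

end Ratio

theorem tendsto_fibPoly_two_succ_div {t : ℝ} (ht : -1 < t) :
    Tendsto (fun m => fibPoly 2 t (m + 1) / fibPoly 2 t m) atTop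
      (𝓝 (1 + Real.sqrt (t + 1))) := by
  set s := Real.sqrt (t + 1)
  have hs : 0 < s := Real.sqrt_pos.2 (by linarith)
  have hs_sq : s ^ 2 = t + 1 := Real.sq_sqrt (by linarith)
  have hu : ∀ m, fibPoly 2 t (m + 2) =
      ((1 + s) + (1 - s)) * fibPoly 2 t (m + 1) - (1 + s) * (1 - s) * fibPoly 2 t m := by
    intro m
    rw [fibPoly_add_two]
    linear_combination -fibPoly 2 t m * hs_sq
  have hqr : ‖1 - s‖ < ‖1 + s‖ := by
    rw [Real.norm_eq_abs, Real.norm_eq_abs, abs_of_pos (by linarith : 0 < 1 + s), abs_lt]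
    constructor <;> linarith
  have h01 : fibPoly (2 : ℝ) t 1 ≠ (1 - s) * fibPoly 2 t 0 := by
    rw [fibPoly_one, fibPoly_zero]
    linarith
  exact tendsto_succ_div_of_recurrence hu hqr h01

theorem hPoly_eval_one_ratio (t : ℝ) (ht : 0 < t) (f : ℕ → ℝ)
    (hf : ∀ n : ℕ, f n = (hPoly n t).eval 1) :
    (∀ n : ℕ, 2 ≤ n → f (n + 2) = 2 * f (n + 1) + t * f n) ∧
    Filter.Tendsto (fun n : ℕ => f (n + 1) / f n) Filter.atTop
      (nhds (1 + Real.sqrt (t + 1))) := by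
  have hfib : ∀ m, f (m + 2) = t * fibPoly 2 t m := fun m => by
    rw [hf, hPoly_eval_one]
    exact sum_speyerG_add_two m t
  refine ⟨fun n hn => ?_, ?_⟩
  · obtain ⟨m, rfl⟩ := Nat.exists_eq_add_of_le' hn
    rw [hfib, hfib, hfib, fibPoly_add_two]
    ring
  rw [← tendsto_add_atTop_iff_nat 2]
  refine (tendsto_fibPoly_two_succ_div (by linarith)).congr fun m => ?_
  rw [hfib, hfib, mul_div_mul_left _ _ ht.ne']
end

section
/- If f is a real polynomial with only real zeros, then f'(x)² − f(x)·f''(x) ≥ 0 for all real x (the Laguerre inequality). -/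
/-!
Write `L f = f'² - f f''`, i.e. `-f² (f'/f)'`. Since the logarithmic derivative is additive,
`L` satisfies the product rule `L (f g) = g² L f + f² L g`, and `L` vanishes on constants and
equals `1` on linear factors `X + a`. A real polynomial with only real zeros is a product of such
factors, so `L f ≥ 0` everywhere.
-/

open Polynomial

namespace Polynomial

section CommRing

variable {R : Type*} [CommRing R]

noncomputable def laguerreForm (f : R[X]) : R[X] :=
  derivative f ^ 2 - f * derivative (derivative f)

theorem laguerreForm_mul (f g : R[X]) :
    laguerreForm (f * g) = g ^ 2 * laguerreForm f + f ^ 2 * laguerreForm g := by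
  simp only [laguerreForm, derivative_mul, derivative_add]
  ring

@[simp]
theorem laguerreForm_C (a : R) : laguerreForm (C a) = 0 := by
  simp [laguerreForm]

@[simp]
theorem laguerreForm_X_add_C (a : R) : laguerreForm (X + C a) = 1 := by
  simp [laguerreForm]

theorem Splits.eval_laguerreForm_nonneg [LinearOrder R] [IsStrictOrderedRing R] {f : R[X]}
    (hf : f.Splits) (x : R) : 0 ≤ (laguerreForm f).eval x := by
  -- `Splits f` is membership in the submonoid generated by the `C a` and the `X + C a`.
  induction hf using Submonoid.closure_induction with
  | mem f hf =>
    obtain ⟨a, rfl⟩ | ⟨a, rfl⟩ := hf <;> simp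
  | one => simp [laguerreForm]
  | mul f g _ _ hf hg =>
    rw [laguerreForm_mul, eval_add, eval_mul, eval_mul, eval_pow, eval_pow]
    positivity

end CommRing

theorem splits_of_forall_aeval_eq_zero_im_eq_zero {f : ℝ[X]}
    (hf : ∀ z : ℂ, aeval z f = 0 → z.im = 0) : f.Splits := by
  refine (IsAlgClosed.splits (f.map (algebraMap ℝ ℂ))).of_splits_map _ fun z hz ↦ ?_
  have hz_im : z.im = 0 := hf z (by simpa [aeval_def, eval_map] using (mem_roots'.mp hz).2)
  exact ⟨z.re, Complex.ext (by simp) (by simp [hz_im])⟩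

end Polynomial

theorem laguerre_inequality (f : Polynomial ℝ)
    (hf : ∀ z : ℂ, Polynomial.aeval z f = 0 → z.im = 0) (x : ℝ) :
    0 ≤ (Polynomial.derivative f).eval x ^ 2
        - f.eval x * (Polynomial.derivative (Polynomial.derivative f)).eval x := by
  have hsplits := splits_of_forall_aeval_eq_zero_im_eq_zero hf
  simpa [laguerreForm] using hsplits.eval_laguerreForm_nonneg x
end
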